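/- Let (Q*, F*) be monopolist-optimal, and let Q be an allocation that is F*-IC. Then ∫ [(θ − κ'(Q*(θ)))·(Q(θ) − Q*(θ)) − (V_Q(θ) − V_{Q*}(θ))] dF*(θ) ≤ 0. -/

import Mathlib

open MeasureTheory Set Filter

/-- A cumulative distribution function on `[θL, θH]`. -/
structure CDF (θL θH : ℝ) where
  toFun : ℝ → ℝ
  mono : Monotone toFun
  right_continuous : ∀ x, ContinuousWithinAt toFun (Set.Ici x) x
  eq_zero : ∀ x, x < θL → toFun x = 0
  eq_one : ∀ x, θH ≤ x → toFun x = 1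

namespace CDF

variable {θL θH : ℝ}

/-- The Stieltjes function associated with a CDF. -/
noncomputable def stieltjes (F : CDF θL θH) : StieltjesFunction ℝ :=
  ⟨F.toFun, F.mono, F.right_continuous⟩

/-- The Lebesgue–Stieltjes measure of a CDF. -/
noncomputable def meas (F : CDF θL θH) : Measure ℝ := F.stieltjes.measure

/-- The integral `∫ φ dF`. -/
noncomputable def integ (F : CDF θL θH) (φ : ℝ → ℝ) : ℝ := ∫ θ, φ θ ∂F.meas

/-- The support of the distribution with CDF `F`. -/
def supp (F : CDF θL θH) : Set ℝ :=
  {x | ∀ ε > 0, 0 < F.toFun (x + ε) - F.toFun (x - ε)}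

/-- The left limit `F₋`. -/
noncomputable def leftLim (F : CDF θL θH) (x : ℝ) : ℝ := Function.leftLim F.toFun x

/-- The mean `∫ θ dF(θ)`. -/
noncomputable def mean (F : CDF θL θH) : ℝ := F.integ (fun θ => θ)

end CDF

/-- `I_F(θ) = ∫_{θL}^{θ} (F₀(t) − F(t)) dt`. -/
noncomputable def IFun {θL θH : ℝ} (F₀ F : CDF θL θH) (θ : ℝ) : ℝ :=
  ∫ t in θL..θ, (F₀.toFun t - F.toFun t)

/-- `F ∈ 𝓘`: `F` is a feasible signal given the prior `F₀`. -/
def IsSignal {θL θH : ℝ} (F₀ F : CDF θL θH) : Prop :=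
  (∀ θ ∈ Set.Icc θL θH, 0 ≤ IFun F₀ F θ) ∧ IFun F₀ F θH = 0

/-- The prior's support contains both endpoints. -/
def IsPrior {θL θH : ℝ} (F₀ : CDF θL θH) : Prop :=
  θL ∈ F₀.supp ∧ θH ∈ F₀.supp

/-- Assumptions on the information-cost function `c` (with derivatives `c'`, `c''`). -/
structure CostAssumptions (θL θH θ₀ : ℝ) (c c' c'' : ℝ → ℝ) : Prop where
  cont : ContinuousOn c (Set.Icc θL θH)
  nonneg : ∀ θ ∈ Set.Icc θL θH, 0 ≤ c θ
  hasDeriv : ∀ θ ∈ Set.Ioo θL θH, HasDerivAt c (c' θ) θ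
  hasDeriv2 : ∀ θ ∈ Set.Ioo θL θH, HasDerivAt c' (c'' θ) θ
  cont2 : ContinuousOn c'' (Set.Ioo θL θH)
  pos2 : ∀ θ ∈ Set.Ioo θL θH, 0 < c'' θ
  minAt : ∀ θ ∈ Set.Icc θL θH, c θ₀ ≤ c θ
  slopeBot : Filter.Tendsto c' (nhdsWithin θL (Set.Ioi θL)) Filter.atBot
  slopeTop : Filter.Tendsto c' (nhdsWithin θH (Set.Iio θH)) Filter.atTop

/-- Assumptions on the production-cost function `κ` (with derivative `κ'`). -/
structure KappaAssumptions (θL θH qbar : ℝ) (κ κ' : ℝ → ℝ) : Prop where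
  hasDeriv : ∀ q ∈ Set.Icc (0:ℝ) qbar, HasDerivWithinAt κ (κ' q) (Set.Icc 0 qbar) q
  contDeriv : ContinuousOn κ' (Set.Icc 0 qbar)
  strictMono : StrictMonoOn κ (Set.Icc 0 qbar)
  strictConvex : StrictConvexOn ℝ (Set.Icc 0 qbar) κ
  zero : κ 0 = 0
  nonneg : ∀ q ∈ Set.Icc (0:ℝ) qbar, 0 ≤ κ q
  derivZero : κ' 0 ≤ θL
  derivTop : θH < κ' qbar

/-- An allocation: a nondecreasing map from types into `[0, q̄]`. -/
def IsAllocation (θL θH qbar : ℝ) (Q : ℝ → ℝ) : Prop :=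
  MonotoneOn Q (Set.Icc θL θH) ∧ ∀ θ ∈ Set.Icc θL θH, Q θ ∈ Set.Icc 0 qbar

/-- The buyer's value `V_{Q,ū}(θ) = ū + ∫_{θL}^{θ} Q(t) dt`. -/
noncomputable def Vfun (θL : ℝ) (Q : ℝ → ℝ) (u θ : ℝ) : ℝ :=
  u + ∫ t in θL..θ, Q t

/-- The mechanism `(Q, ū)` is `F`-incentive compatible. -/
def IsIC {θL θH : ℝ} (F₀ : CDF θL θH) (c : ℝ → ℝ) (Q : ℝ → ℝ) (u : ℝ)
    (F : CDF θL θH) : Prop :=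
  IsSignal F₀ F ∧
  ∀ F' : CDF θL θH, IsSignal F₀ F' →
    F'.integ (fun θ => Vfun θL Q u θ - c θ) ≤ F.integ (fun θ => Vfun θL Q u θ - c θ)

/-- The monopolist's per-report profit `π_{Q,ū}(θ)`. -/
noncomputable def profit (θL : ℝ) (κ Q : ℝ → ℝ) (u θ : ℝ) : ℝ :=
  θ * Q θ - Vfun θL Q u θ - κ (Q θ)

/-- `(Q, F)` is monopolist-optimal. -/
def MonopolistOptimal {θL θH : ℝ} (qbar : ℝ) (F₀ : CDF θL θH) (c κ : ℝ → ℝ)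
    (Q : ℝ → ℝ) (F : CDF θL θH) : Prop :=
  IsAllocation θL θH qbar Q ∧ IsIC F₀ c Q 0 F ∧
  ∀ (Q' : ℝ → ℝ) (u' : ℝ) (F' : CDF θL θH),
    IsAllocation θL θH qbar Q' → 0 ≤ u' → IsIC F₀ c Q' u' F' →
    F'.integ (profit θL κ Q' u') ≤ F.integ (profit θL κ Q 0)

/-- `P` is an `F`-shadow price. -/
def IsShadowPrice {θL θH : ℝ} (F₀ F : CDF θL θH) (P : ℝ → ℝ) : Prop :=
  (∃ K : NNReal, LipschitzOnWith K P (Set.Icc θL θH)) ∧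
  ConvexOn ℝ (Set.Icc θL θH) P ∧
  ∀ a b : ℝ, Set.Ioo a b ⊆ {θ | θ ∈ Set.Icc θL θH ∧ 0 < IFun F₀ F θ} →
    ∃ m k : ℝ, ∀ θ ∈ Set.Ioo a b, P θ = m * θ + k

/-- `P` is an `F`-shadow price for `φ`. -/
def IsShadowPriceFor {θL θH : ℝ} (F₀ F : CDF θL θH) (φ P : ℝ → ℝ) : Prop :=
  IsShadowPrice F₀ F P ∧ (∀ θ ∈ Set.Icc θL θH, φ θ ≤ P θ) ∧
  ∀ θ ∈ F.supp, P θ = φ θ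

/-- `θL_F`, the minimum of the support of `F`. -/
noncomputable def thetaLF {θL θH : ℝ} (F : CDF θL θH) : ℝ := sInf F.supp

/-- `θH_F`, the maximum of the support of `F`. -/
noncomputable def thetaHF {θL θH : ℝ} (F : CDF θL θH) : ℝ := sSup F.supp

/-- `p` is an `F`-shadow derivative. -/
def IsShadowDeriv {θL θH : ℝ} (qbar : ℝ) (F₀ : CDF θL θH) (c' : ℝ → ℝ)
    (F : CDF θL θH) (p : ℝ → ℝ) : Prop :=
  (∃ M : ℝ, ∀ θ ∈ Set.Icc θL θH, |p θ| ≤ M) ∧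
  MonotoneOn p (Set.Icc θL θH) ∧
  (∀ a b : ℝ, Set.Ioo a b ⊆ {θ | θ ∈ Set.Icc θL θH ∧ 0 < IFun F₀ F θ} →
    ∀ x ∈ Set.Ioo a b, ∀ y ∈ Set.Ioo a b, p x = p y) ∧
  -c' (thetaLF F) ≤ p (thetaLF F) ∧
  p (thetaHF F) ≤ qbar - c' (thetaHF F)

/-- The allocation `Q^p` induced by a shadow derivative `p`. -/
noncomputable def inducedAlloc {θL θH : ℝ} (qbar : ℝ) (c' : ℝ → ℝ)
    (F : CDF θL θH) (p : ℝ → ℝ) (θ : ℝ) : ℝ :=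
  if θ < thetaLF F then max (p (thetaLF F) + c' θ) 0
  else if θ ≤ thetaHF F then p θ + c' θ
  else min (p (thetaHF F) + c' θ) qbar

/-- `Q` is `F`-information-cost-canceling. -/
def IsICC {θL θH : ℝ} (qbar : ℝ) (F₀ : CDF θL θH) (c' : ℝ → ℝ)
    (F : CDF θL θH) (Q : ℝ → ℝ) : Prop :=
  ∃ p : ℝ → ℝ, IsShadowDeriv qbar F₀ c' F p ∧
    ∀ θ ∈ Set.Icc θL θH, Q θ = inducedAlloc qbar c' F p θ

/-- `φ` satisfies edge irrelevance: some maximizer over CDFs with the prior mean has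
support in the open interval. -/
def EdgeIrrelevant {θL θH : ℝ} (F₀ : CDF θL θH) (φ : ℝ → ℝ) : Prop :=
  ∃ F' : CDF θL θH, F'.mean = F₀.mean ∧
    (∀ G : CDF θL θH, G.mean = F₀.mean → G.integ φ ≤ F'.integ φ) ∧
    F'.supp ⊆ Set.Ioo θL θH

/-- `θH_Q = inf {θ : Q(θ) = Q(θH)}`. -/
noncomputable def thetaHQ (θL θH : ℝ) (Q : ℝ → ℝ) : ℝ :=
  sInf {θ | θ ∈ Set.Icc θL θH ∧ Q θ = Q θH}

/-- `θL_Q = sup {θ : Q(θ) = Q(θL)}`. -/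
noncomputable def thetaLQ (θL θH : ℝ) (Q : ℝ → ℝ) : ℝ :=
  sSup {θ | θ ∈ Set.Icc θL θH ∧ Q θ = Q θL}

/-- The support of a (cumulative distribution) function `G : ℝ → ℝ`. -/
def suppOfFun (G : ℝ → ℝ) : Set ℝ := {x | ∀ ε > 0, 0 < G (x + ε) - G (x - ε)}

/-- The conditional CDF `F(·|θ ∈ [a, b])`. -/
noncomputable def condFun {θL θH : ℝ} (F : CDF θL θH) (a b θ : ℝ) : ℝ :=
  if θ < a then 0
  else (F.toFun (min θ b) - F.leftLim a) / (F.toFun b - F.leftLim a)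


/-! For `t ∈ [0, 1]` the mixture `Q* + t • (Q - Q*)` is again `F*`-IC, since the buyer's
surplus is affine in the allocation; optimality of `(Q*, F*)` therefore gives
`∫ (π_{Q* + t • (Q - Q*)} - π_{Q*}) / t dF* ≤ 0`. As `t ↓ 0` the integrand tends to the one in
the claim, and dominated convergence applies because the difference quotients of the convex `κ`
are squeezed between `κ'(Q*) (Q - Q*)` and `κ(Q) - κ(Q*)`. All integrability comes from
monotonicity on `[θL, θH]`, which carries every CDF on `Θ`. -/

open scoped Topology

section ConvexSegment

variable {s : Set ℝ} {f : ℝ → ℝ} {d x y t : ℝ}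

lemma ConvexOn.add_mul_sub_le_of_hasDerivWithinAt (hf : ConvexOn ℝ s f)
    (hd : HasDerivWithinAt f d s x) (hx : x ∈ s) (hy : y ∈ s) : f x + d * (y - x) ≤ f y := by
  rcases lt_trichotomy x y with hxy | rfl | hxy
  · have h := hf.le_slope_of_hasDerivWithinAt hx hy hxy hd
    rw [slope_def_field, le_div_iff₀ (sub_pos.2 hxy)] at h
    linarith
  · simp
  · have h := hf.slope_le_of_hasDerivWithinAt hy hx hxy hd
    rw [slope_def_field, div_le_iff₀ (sub_pos.2 hxy)] at h
    linarith

lemma ConvexOn.mul_sub_le_div_segment (hf : ConvexOn ℝ s f) (hd : HasDerivWithinAt f d s x)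
    (hx : x ∈ s) (hy : y ∈ s) (ht₀ : 0 < t) (ht₁ : t ≤ 1) :
    d * (y - x) ≤ (f (x + t * (y - x)) - f x) / t := by
  have h := hf.add_mul_sub_le_of_hasDerivWithinAt hd hx (hf.1.add_smul_sub_mem hx hy ⟨ht₀.le, ht₁⟩)
  rw [le_div_iff₀ ht₀]
  simp only [smul_eq_mul] at h
  linarith

lemma ConvexOn.div_segment_le_sub (hf : ConvexOn ℝ s f) (hx : x ∈ s) (hy : y ∈ s)
    (ht₀ : 0 < t) (ht₁ : t ≤ 1) : (f (x + t * (y - x)) - f x) / t ≤ f y - f x := by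
  have h := hf.2 hx hy (sub_nonneg.2 ht₁) ht₀.le (sub_add_cancel 1 t)
  have hpt : (1 - t) • x + t • y = x + t * (y - x) := by simp only [smul_eq_mul]; ring
  rw [hpt, smul_eq_mul, smul_eq_mul] at h
  rw [div_le_iff₀ ht₀]
  linarith

lemma ConvexOn.abs_div_segment_le (hf : ConvexOn ℝ s f) (hd : HasDerivWithinAt f d s x)
    (hx : x ∈ s) (hy : y ∈ s) (ht₀ : 0 < t) (ht₁ : t ≤ 1) :
    |(f (x + t * (y - x)) - f x) / t| ≤ |d * (y - x)| + |f y - f x| := by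
  have hlo := hf.mul_sub_le_div_segment hd hx hy ht₀ ht₁
  have hhi := hf.div_segment_le_sub hx hy ht₀ ht₁
  rw [abs_le]
  constructor <;> linarith [neg_abs_le (d * (y - x)), le_abs_self (f y - f x),
    abs_nonneg (d * (y - x)), abs_nonneg (f y - f x)]

lemma HasDerivWithinAt.tendsto_div_segment (hs : Convex ℝ s) (hd : HasDerivWithinAt f d s x)
    (hx : x ∈ s) (hy : y ∈ s) :
    Tendsto (fun t => (f (x + t * (y - x)) - f x) / t) (𝓝[>] 0) (𝓝 (d * (y - x))) := by
  have hseg : HasDerivWithinAt (fun u : ℝ => x + u * (y - x)) (y - x) (Icc 0 1) 0 :=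
    ((hasDerivAt_mul_const (y - x)).const_add x).hasDerivWithinAt
  have hmaps : MapsTo (fun u : ℝ => x + u * (y - x)) (Icc 0 1) s :=
    fun u hu => hs.add_smul_sub_mem hx hy hu
  have hcomp := hasDerivWithinAt_iff_tendsto_slope.1 (hd.comp_of_eq (0 : ℝ) hseg hmaps (by simp))
  have hfilter : 𝓝[>] (0 : ℝ) ≤ 𝓝[Icc 0 1 \ {0}] 0 := by
    rw [← nhdsWithin_Ioo_eq_nhdsGT one_pos]
    exact nhdsWithin_mono _ fun u hu => ⟨Ioo_subset_Icc_self hu, hu.1.ne'⟩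
  refine (hcomp.mono_left hfilter).congr fun u => ?_
  simp [slope_def_field]

namespace CDF

variable {θL θH : ℝ} (F : CDF θL θH)

lemma tendsto_stieltjes_atBot : Tendsto F.stieltjes atBot (𝓝 0) :=
  tendsto_const_nhds.congr' (by
    filter_upwards [eventually_lt_atBot θL] with x hx using (F.eq_zero x hx).symm)

lemma tendsto_stieltjes_atTop : Tendsto F.stieltjes atTop (𝓝 1) :=
  tendsto_const_nhds.congr' (by
    filter_upwards [eventually_ge_atTop θH] with x hx using (F.eq_one x hx).symm)

instance isProbabilityMeasure_meas : IsProbabilityMeasure F.meas :=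
  F.stieltjes.isProbabilityMeasure F.tendsto_stieltjes_atBot F.tendsto_stieltjes_atTop

lemma ae_mem_Icc : ∀ᵐ θ ∂F.meas, θ ∈ Icc θL θH := by
  have hleft : Function.leftLim F.stieltjes θL = 0 :=
    leftLim_eq_of_tendsto (tendsto_const_nhds.congr' (by
      filter_upwards [self_mem_nhdsWithin] with x hx using (F.eq_zero x hx).symm))
  have hIio : F.meas (Iio θL) = 0 := by
    simp [meas, F.stieltjes.measure_Iio F.tendsto_stieltjes_atBot, hleft]
  have hIoi : F.meas (Ioi θH) = 0 := by
    rw [meas, F.stieltjes.measure_Ioi F.tendsto_stieltjes_atTop,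
      show F.stieltjes θH = 1 from F.eq_one θH le_rfl, sub_self, ENNReal.ofReal_zero]
  refine measure_mono_null (fun θ hθ => ?_) (measure_union_null hIio hIoi)
  by_contra h
  simp only [mem_union, mem_Iio, mem_Ioi, not_or, not_lt] at h
  exact hθ ⟨h.1, h.2⟩

lemma restrict_Icc : F.meas.restrict (Icc θL θH) = F.meas :=
  Measure.restrict_eq_self_of_ae_mem F.ae_mem_Icc

lemma integ_congr {φ ψ : ℝ → ℝ} (h : EqOn φ ψ (Icc θL θH)) : F.integ φ = F.integ ψ :=
  integral_congr_ae (F.ae_mem_Icc.mono h)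

variable {F} {f : ℝ → ℝ}

lemma integrable_of_abs_le (hf : AEStronglyMeasurable f F.meas) (C : ℝ)
    (hC : ∀ θ ∈ Icc θL θH, |f θ| ≤ C) : Integrable f F.meas :=
  .of_bound hf C (F.ae_mem_Icc.mono hC)

lemma integrable_of_monotoneOn (hf : MonotoneOn f (Icc θL θH)) : Integrable f F.meas := by
  have hm := aemeasurable_restrict_of_monotoneOn (μ := F.meas) measurableSet_Icc hf
  rw [F.restrict_Icc] at hm
  refine integrable_of_abs_le hm.aestronglyMeasurable (|f θL| + |f θH|) fun θ hθ => ?_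
  have hlo := hf ⟨le_rfl, hθ.1.trans hθ.2⟩ hθ hθ.1
  have hhi := hf hθ ⟨hθ.1.trans hθ.2, le_rfl⟩ hθ.2
  rw [abs_le]
  constructor <;> linarith [neg_abs_le (f θL), le_abs_self (f θH), abs_nonneg (f θL),
    abs_nonneg (f θH)]

lemma integrable_of_continuousOn (hf : ContinuousOn f (Icc θL θH)) : Integrable f F.meas := by
  have hm := hf.aemeasurable (μ := F.meas) measurableSet_Icc
  rw [F.restrict_Icc] at hm
  obtain ⟨C, hC⟩ := isCompact_Icc.exists_bound_of_continuousOn hf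
  exact integrable_of_abs_le hm.aestronglyMeasurable C hC

end CDF

namespace IsAllocation

variable {θL θH qbar t : ℝ} {Q Q₀ Q₁ : ℝ → ℝ}

lemma intervalIntegrable (hQ : IsAllocation θL θH qbar Q) {a b : ℝ} (ha : a ∈ Icc θL θH)
    (hb : b ∈ Icc θL θH) : IntervalIntegrable Q volume a b :=
  (hQ.1.mono (uIcc_subset_Icc ha hb)).intervalIntegrable

lemma monotoneOn_Vfun (hQ : IsAllocation θL θH qbar Q) (u : ℝ) :
    MonotoneOn (Vfun θL Q u) (Icc θL θH) := by
  intro a ha b hb hab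
  have hL : θL ∈ Icc θL θH := ⟨le_rfl, ha.1.trans ha.2⟩
  simp only [Vfun, add_le_add_iff_left]
  rw [← intervalIntegral.integral_add_adjacent_intervals (hQ.intervalIntegrable hL ha)
    (hQ.intervalIntegrable ha hb)]
  exact le_add_of_nonneg_right <| intervalIntegral.integral_nonneg hab fun s hs =>
    (hQ.2 s ⟨ha.1.trans hs.1, hs.2.trans hb.2⟩).1

lemma monotoneOn_mul_id (hθL : 0 ≤ θL) (hQ : IsAllocation θL θH qbar Q) :
    MonotoneOn (fun θ => θ * Q θ) (Icc θL θH) :=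
  monotoneOn_id.mul hQ.1 (fun _ hθ => hθL.trans hθ.1) fun θ hθ => (hQ.2 θ hθ).1

lemma add_smul_sub (h₀ : IsAllocation θL θH qbar Q₀) (h₁ : IsAllocation θL θH qbar Q₁)
    (ht₀ : 0 ≤ t) (ht₁ : t ≤ 1) : IsAllocation θL θH qbar (Q₀ + t • (Q₁ - Q₀)) := by
  refine ⟨fun a ha b hb hab => ?_, fun θ hθ => (convex_Icc 0 qbar).add_smul_sub_mem
    (h₀.2 θ hθ) (h₁.2 θ hθ) ⟨ht₀, ht₁⟩⟩
  have e : ∀ θ, (Q₀ + t • (Q₁ - Q₀)) θ = (1 - t) * Q₀ θ + t * Q₁ θ := fun θ => by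
    simp only [Pi.add_apply, Pi.smul_apply, Pi.sub_apply, smul_eq_mul]; ring
  rw [e, e]
  exact add_le_add (mul_le_mul_of_nonneg_left (h₀.1 ha hb hab) (sub_nonneg.2 ht₁))
    (mul_le_mul_of_nonneg_left (h₁.1 ha hb hab) ht₀)

lemma Vfun_add_smul_sub (h₀ : IsAllocation θL θH qbar Q₀) (h₁ : IsAllocation θL θH qbar Q₁)
    {θ : ℝ} (hθ : θ ∈ Icc θL θH) :
    Vfun θL (Q₀ + t • (Q₁ - Q₀)) 0 θ
      = Vfun θL Q₀ 0 θ + t * (Vfun θL Q₁ 0 θ - Vfun θL Q₀ 0 θ) := by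
  have hL : θL ∈ Icc θL θH := ⟨le_rfl, hθ.1.trans hθ.2⟩
  have i₀ := h₀.intervalIntegrable hL hθ
  have i₁ := h₁.intervalIntegrable hL hθ
  simp only [Vfun, zero_add, Pi.add_apply, Pi.smul_apply, Pi.sub_apply, smul_eq_mul]
  rw [intervalIntegral.integral_add i₀ ((i₁.sub i₀).const_mul t),
    intervalIntegral.integral_const_mul, intervalIntegral.integral_sub i₁ i₀]

variable {F : CDF θL θH} {κ : ℝ → ℝ}

lemma integrable_mul_id_sub_Vfun (hθL : 0 ≤ θL) (hQ : IsAllocation θL θH qbar Q) :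
    Integrable (fun θ => θ * Q θ - Vfun θL Q 0 θ) F.meas :=
  (CDF.integrable_of_monotoneOn (hQ.monotoneOn_mul_id hθL)).sub
    (CDF.integrable_of_monotoneOn (hQ.monotoneOn_Vfun 0))

lemma integrable_profit (hθL : 0 ≤ θL) (hκ : MonotoneOn κ (Icc 0 qbar))
    (hQ : IsAllocation θL θH qbar Q) : Integrable (profit θL κ Q 0) F.meas :=
  (hQ.integrable_mul_id_sub_Vfun hθL).sub (CDF.integrable_of_monotoneOn (hκ.comp hQ.1 hQ.2))

end IsAllocation

section Mixture

variable {θL θH qbar t : ℝ} {F₀ F : CDF θL θH} {c κ : ℝ → ℝ} {Q₀ Q₁ : ℝ → ℝ}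

lemma integ_surplus_add_smul_sub (hc : ContinuousOn c (Icc θL θH))
    (h₀ : IsAllocation θL θH qbar Q₀) (h₁ : IsAllocation θL θH qbar Q₁) (G : CDF θL θH) :
    G.integ (fun θ => Vfun θL (Q₀ + t • (Q₁ - Q₀)) 0 θ - c θ)
      = G.integ (fun θ => Vfun θL Q₀ 0 θ - c θ)
        + t * (G.integ (fun θ => Vfun θL Q₁ 0 θ - c θ)
          - G.integ (fun θ => Vfun θL Q₀ 0 θ - c θ)) := by
  have hcG := CDF.integrable_of_continuousOn (F := G) hc
  have i₀ : Integrable (fun θ => Vfun θL Q₀ 0 θ - c θ) G.meas :=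
    (CDF.integrable_of_monotoneOn (h₀.monotoneOn_Vfun 0)).sub hcG
  have i₁ : Integrable (fun θ => Vfun θL Q₁ 0 θ - c θ) G.meas :=
    (CDF.integrable_of_monotoneOn (h₁.monotoneOn_Vfun 0)).sub hcG
  have hpt : EqOn (fun θ => Vfun θL (Q₀ + t • (Q₁ - Q₀)) 0 θ - c θ)
      (fun θ => (Vfun θL Q₀ 0 θ - c θ)
        + t * ((Vfun θL Q₁ 0 θ - c θ) - (Vfun θL Q₀ 0 θ - c θ))) (Icc θL θH) := fun θ hθ => by
    simp only [h₀.Vfun_add_smul_sub h₁ hθ]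
    ring
  rw [G.integ_congr hpt]
  simp only [CDF.integ]
  have i₁₀ : Integrable (fun θ => t * ((Vfun θL Q₁ 0 θ - c θ) - (Vfun θL Q₀ 0 θ - c θ))) G.meas :=
    (i₁.sub i₀).const_mul t
  rw [integral_add i₀ i₁₀, integral_const_mul, integral_sub i₁ i₀]

lemma IsIC.add_smul_sub (hc : ContinuousOn c (Icc θL θH))
    (h₀ : IsAllocation θL θH qbar Q₀) (h₁ : IsAllocation θL θH qbar Q₁)
    (hIC₀ : IsIC F₀ c Q₀ 0 F) (hIC₁ : IsIC F₀ c Q₁ 0 F) (ht₀ : 0 ≤ t) (ht₁ : t ≤ 1) :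
    IsIC F₀ c (Q₀ + t • (Q₁ - Q₀)) 0 F := by
  refine ⟨hIC₀.1, fun F' hF' => ?_⟩
  rw [integ_surplus_add_smul_sub hc h₀ h₁, integ_surplus_add_smul_sub hc h₀ h₁]
  have hle₀ := mul_le_mul_of_nonneg_left (hIC₀.2 F' hF') (sub_nonneg.2 ht₁)
  have hle₁ := mul_le_mul_of_nonneg_left (hIC₁.2 F' hF') ht₀
  linarith

lemma profit_add_smul_sub_sub_div (h₀ : IsAllocation θL θH qbar Q₀)
    (h₁ : IsAllocation θL θH qbar Q₁) (ht : t ≠ 0) {θ : ℝ} (hθ : θ ∈ Icc θL θH) :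
    (profit θL κ (Q₀ + t • (Q₁ - Q₀)) 0 θ - profit θL κ Q₀ 0 θ) / t
      = (θ * Q₁ θ - Vfun θL Q₁ 0 θ) - (θ * Q₀ θ - Vfun θL Q₀ 0 θ)
        - (κ (Q₀ θ + t * (Q₁ θ - Q₀ θ)) - κ (Q₀ θ)) / t := by
  simp only [profit, h₀.Vfun_add_smul_sub h₁ hθ, Pi.add_apply, Pi.smul_apply, Pi.sub_apply,
    smul_eq_mul]
  field_simp
  ring

lemma MonopolistOptimal.integ_profit_sub_div_nonpos (hθL : 0 ≤ θL)
    (hc : ContinuousOn c (Icc θL θH)) (hκ : MonotoneOn κ (Icc 0 qbar))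
    (hopt : MonopolistOptimal qbar F₀ c κ Q₀ F) (h₁ : IsAllocation θL θH qbar Q₁)
    (hIC₁ : IsIC F₀ c Q₁ 0 F) (ht₀ : 0 < t) (ht₁ : t ≤ 1) :
    F.integ (fun θ => (profit θL κ (Q₀ + t • (Q₁ - Q₀)) 0 θ - profit θL κ Q₀ 0 θ) / t) ≤ 0 := by
  obtain ⟨h₀, hIC₀, hbest⟩ := hopt
  have ht := h₀.add_smul_sub h₁ ht₀.le ht₁
  have hle := hbest _ 0 F ht le_rfl (hIC₀.add_smul_sub hc h₀ h₁ hIC₁ ht₀.le ht₁)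
  simp only [CDF.integ] at hle ⊢
  rw [integral_div, integral_sub (ht.integrable_profit hθL hκ) (h₀.integrable_profit hθL hκ)]
  exact div_nonpos_of_nonpos_of_nonneg (sub_nonpos.2 hle) ht₀.le

end Mixture

lemma KappaAssumptions.exists_bound_div_segment {θL θH qbar : ℝ} {κ κ' : ℝ → ℝ}
    (hκ : KappaAssumptions θL θH qbar κ κ') :
    ∃ C, ∀ x ∈ Icc 0 qbar, ∀ y ∈ Icc 0 qbar, ∀ t ∈ Ioc (0 : ℝ) 1,
      |(κ (x + t * (y - x)) - κ x) / t| ≤ C := by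
  obtain ⟨K, hK⟩ := isCompact_Icc.exists_bound_of_continuousOn
    fun q hq => (hκ.hasDeriv q hq).continuousWithinAt
  obtain ⟨K', hK'⟩ := isCompact_Icc.exists_bound_of_continuousOn hκ.contDeriv
  refine ⟨K' * qbar + (K + K), fun x hx y hy t ht => ?_⟩
  have hyx : |y - x| ≤ qbar := abs_sub_le_iff.2 ⟨by linarith [hx.1, hy.2], by linarith [hx.2, hy.1]⟩
  refine (hκ.strictConvex.convexOn.abs_div_segment_le (hκ.hasDeriv x hx) hx hy ht.1 ht.2).trans
    (add_le_add ?_ ((abs_sub _ _).trans (add_le_add (hK y hy) (hK x hx))))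
  rw [abs_mul]
  exact mul_le_mul (hK' x hx) hyx (abs_nonneg _) ((abs_nonneg _).trans (hK' x hx))

theorem statement15_general {θL θH : ℝ} (hθL : 0 ≤ θL)
    (F₀ : CDF θL θH)
    (c c' c'' : ℝ → ℝ) (hc : CostAssumptions θL θH F₀.mean c c' c'')
    (qbar : ℝ)
    (κ κ' : ℝ → ℝ) (hκ : KappaAssumptions θL θH qbar κ κ')
    (Qs : ℝ → ℝ) (Fs : CDF θL θH)
    (hopt : MonopolistOptimal qbar F₀ c κ Qs Fs)
    (Q : ℝ → ℝ) (hQ : IsAllocation θL θH qbar Q) (hIC : IsIC F₀ c Q 0 Fs) :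
    Fs.integ (fun θ =>
      (θ - κ' (Qs θ)) * (Q θ - Qs θ) - (Vfun θL Q 0 θ - Vfun θL Qs 0 θ)) ≤ 0 := by
  have hQs := hopt.1
  have hκm := hκ.strictMono.monotoneOn
  obtain ⟨C, hC⟩ := hκ.exists_bound_div_segment
  set A := fun θ => (θ * Q θ - Vfun θL Q 0 θ) - (θ * Qs θ - Vfun θL Qs 0 θ)
  have hA : Integrable A Fs.meas :=
    (hQ.integrable_mul_id_sub_Vfun hθL).sub (hQs.integrable_mul_id_sub_Vfun hθL)
  have hsmall : ∀ᶠ t in 𝓝[>] (0 : ℝ), t ∈ Ioc 0 1 :=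
    mem_of_superset (Ioo_mem_nhdsGT one_pos) Ioo_subset_Ioc_self
  refine le_of_tendsto (tendsto_integral_filter_of_dominated_convergence (fun θ => |A θ| + C)
    ?_ ?_ (hA.abs.add (integrable_const C)) ?_)
    (hsmall.mono fun t ht => hopt.integ_profit_sub_div_nonpos hθL hc.cont hκm hQ hIC ht.1 ht.2)
  · refine hsmall.mono fun t ht => ((Integrable.sub ?_ ?_).div_const t).aestronglyMeasurable
    exacts [(hQs.add_smul_sub hQ ht.1.le ht.2).integrable_profit hθL hκm,
      hQs.integrable_profit hθL hκm]
  · refine hsmall.mono fun t ht => Fs.ae_mem_Icc.mono fun θ hθ => ?_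
    rw [profit_add_smul_sub_sub_div hQs hQ ht.1.ne' hθ, Real.norm_eq_abs]
    exact (abs_sub _ _).trans (add_le_add le_rfl (hC _ (hQs.2 θ hθ) _ (hQ.2 θ hθ) t ht))
  · refine Fs.ae_mem_Icc.mono fun θ hθ => ?_
    have hlim := (hκ.hasDeriv _ (hQs.2 θ hθ)).tendsto_div_segment (convex_Icc 0 qbar)
      (hQs.2 θ hθ) (hQ.2 θ hθ)
    convert (tendsto_const_nhds.sub hlim).congr' (hsmall.mono fun t ht =>
      (profit_add_smul_sub_sub_div hQs hQ ht.1.ne' hθ).symm) using 2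
    ring

theorem statement15 {θL θH : ℝ} (hθL : 0 ≤ θL) (hθ : θL < θH)
    (F₀ : CDF θL θH) (hF₀ : IsPrior F₀)
    (c c' c'' : ℝ → ℝ) (hc : CostAssumptions θL θH F₀.mean c c' c'')
    (qbar : ℝ) (hqbar : 0 < qbar)
    (κ κ' : ℝ → ℝ) (hκ : KappaAssumptions θL θH qbar κ κ')
    (Qs : ℝ → ℝ) (Fs : CDF θL θH)
    (hopt : MonopolistOptimal qbar F₀ c κ Qs Fs)
    (Q : ℝ → ℝ) (hQ : IsAllocation θL θH qbar Q) (hIC : IsIC F₀ c Q 0 Fs) :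
    Fs.integ (fun θ =>
      (θ - κ' (Qs θ)) * (Q θ - Qs θ) - (Vfun θL Q 0 θ - Vfun θL Qs 0 θ)) ≤ 0 :=
  statement15_general hθL F₀ c c' c'' hc qbar κ κ' hκ Qs Fs hopt Q hQ hIC
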